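/- arXiv:math/9202208 — 2 statements merged into one kernel-verified Lean document; each statement's English description precedes it below -/
import Mathlib

section
/- Let $i_1, i_2 : M \to N$ be proper immersions with equal images $i_1(M) = i_2(M) = L$ and suppose the counting functions $\delta_1, \delta_2 : L \to \mathbb{N}$ (where $\delta_k(y) = \#i_k^{-1}(y)$) satisfy $\delta_1 \ne \delta_2$. Then the $\mathrm{Diff}(M)$-orbits of $i_1$ and $i_2$ are distinct and can be separated by disjoint $\mathrm{Diff}(M)$-saturated open neighborhoods in the space of proper immersions with the Whitney $C^0$ topology. -/
/-!
Pick `y` with `#(i₁ ⁻¹' {y}) < #(i₂ ⁻¹' {y})`; both fibres are finite, being compact and discrete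
(immersions are locally injective). Choose open neighbourhoods `B`, `B'` of `y` such that
`i₂ ⁻¹' B` lies in pairwise disjoint neighbourhoods of the points of `i₂ ⁻¹' {y}`, while
`i₁ ⁻¹' B'` is covered by one connected set per point of `i₁ ⁻¹' {y}`, each mapped into `B`.
These conditions are Whitney `C⁰`-open, so for every `g` near `i₂` at least `#(i₂ ⁻¹' {y})`
components of `g ⁻¹' B` meet `g ⁻¹' B'`, and for every `g` near `i₁` at most `#(i₁ ⁻¹' {y})` do.
This count is invariant under reparametrisation by homeomorphisms, so the interiors of the set
where it is large and of its complement are disjoint saturated neighbourhoods of the two orbits.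
-/

open Function Set
open scoped Manifold Topology ContDiff

/-- The Whitney (graph) $C^0$-topology on the space of maps `M → N`. -/
def whitneyC0Topology (M N : Type*) [TopologicalSpace M] [TopologicalSpace N] :
    TopologicalSpace (M → N) :=
  TopologicalSpace.generateFrom
    {S | ∃ U : Set (M × N), IsOpen U ∧ S = {f : M → N | ∀ x, (x, f x) ∈ U}}

theorem HasStrictFDerivAt.exists_mem_nhds_injOn {𝕜 : Type*} [NontriviallyNormedField 𝕜]
    [CompleteSpace 𝕜] {E F : Type*} [NormedAddCommGroup E] [NormedSpace 𝕜 E]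
    [FiniteDimensional 𝕜 E] [NormedAddCommGroup F] [NormedSpace 𝕜 F] {f : E → F}
    {f' : E →L[𝕜] F} {a : E} (hf : HasStrictFDerivAt f f' a) (hf' : Injective f') :
    ∃ s ∈ 𝓝 a, InjOn f s := by
  obtain ⟨K, hK0, hK⟩ := f'.toLinearMap.exists_antilipschitzWith (LinearMap.ker_eq_bot.mpr hf')
  obtain ⟨s, hs, hfs⟩ := hf.approximates_deriv_on_nhds (c := K⁻¹ / 2) (Or.inr (by positivity))
  have hc : K⁻¹ / 2 < K⁻¹ := NNReal.half_lt_self (inv_ne_zero hK0.ne')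
  have hinj : Injective fun x : s => f x := by
    simpa using ((hK.domRestrict s).add_lipschitzWith hfs.lipschitz_sub hc).injective
  exact ⟨s, hs, injOn_iff_injective.2 hinj⟩

theorem exists_mem_nhds_injOn_of_injective_mfderiv
    {E : Type*} [NormedAddCommGroup E] [NormedSpace ℝ E] [FiniteDimensional ℝ E]
    {H : Type*} [TopologicalSpace H] {I : ModelWithCorners ℝ E H} [I.Boundaryless]
    {M : Type*} [TopologicalSpace M] [ChartedSpace H M]
    {E' : Type*} [NormedAddCommGroup E'] [NormedSpace ℝ E']
    {H' : Type*} [TopologicalSpace H'] {J : ModelWithCorners ℝ E' H'}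
    {N : Type*} [TopologicalSpace N] [ChartedSpace H' N]
    {n : WithTop ℕ∞} {f : M → N} {x : M} (hf : ContMDiffAt I J n f x) (hn : n ≠ 0)
    (hf' : Injective (mfderiv I J f x)) : ∃ u ∈ 𝓝 x, InjOn f u := by
  set φ := extChartAt I x
  have hfc : ContDiffAt ℝ n (writtenInExtChartAt I J x f) (φ x) := by
    have := (contMDiffAt_iff.mp hf).2
    rwa [I.range_eq_univ, contDiffWithinAt_univ] at this
  have hderiv : mfderiv I J f x = fderiv ℝ (writtenInExtChartAt I J x f) (φ x) := by
    rw [(hf.mdifferentiableAt hn).mfderiv, I.range_eq_univ, fderivWithin_univ]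
  obtain ⟨s, hs, hinj⟩ := (hfc.hasStrictFDerivAt hn).exists_mem_nhds_injOn (hderiv ▸ hf')
  refine ⟨φ.source ∩ φ ⁻¹' s,
    Filter.inter_mem (extChartAt_source_mem_nhds x)
      ((continuousAt_extChartAt x).preimage_mem_nhds hs),
    fun a ha b hb hab => φ.injOn ha.1 hb.1 (hinj ha.2 hb.2 ?_)⟩
  change extChartAt J (f x) (f (φ.symm (φ a))) = extChartAt J (f x) (f (φ.symm (φ b)))
  rw [φ.left_inv ha.1, φ.left_inv hb.1, hab]

theorem IsCompact.finite_of_injOn_nhds {X Y : Type*} [TopologicalSpace X] {f : X → Y}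
    (hf : ∀ x, ∃ u ∈ 𝓝 x, InjOn f u) {y : Y} (hy : IsCompact (f ⁻¹' {y})) :
    (f ⁻¹' {y}).Finite := by
  choose u hu hinj using hf
  obtain ⟨t, htfib, hcover⟩ := hy.elim_nhds_subcover u fun x _ => hu x
  refine t.finite_toSet.subset fun a ha => ?_
  obtain ⟨b, hb, hab⟩ := mem_iUnion₂.mp (hcover ha)
  rwa [hinj b hab (mem_of_mem_nhds (hu b)) (ha.trans (htfib b hb).symm)]

section WhitneyC0

variable {M N : Type*} [TopologicalSpace M]

def IsHomeomorphInvariant (S : Set (M → N)) : Prop :=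
  ∀ g ∈ S, ∀ φ : M ≃ₜ M, g ∘ φ ∈ S

theorem IsHomeomorphInvariant.compl {S : Set (M → N)} (hS : IsHomeomorphInvariant S) :
    IsHomeomorphInvariant Sᶜ := fun g hg φ hgφ => hg (by simpa [comp_assoc] using hS _ hgφ φ.symm)

variable [TopologicalSpace N]

theorem isOpen_whitneyC0_setOf_mapsTo {A : Set M} {B : Set N} (hA : IsClosed A) (hB : IsOpen B) :
    IsOpen[whitneyC0Topology M N] {g : M → N | MapsTo g A B} := by
  refine TopologicalSpace.isOpen_generateFrom_of_mem
    ⟨Aᶜ ×ˢ univ ∪ univ ×ˢ B, (hA.isOpen_compl.prod isOpen_univ).union (isOpen_univ.prod hB), ?_⟩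
  ext g
  simp [MapsTo, or_iff_not_imp_left]

theorem isOpen_whitneyC0_setOf_preimage_subset {F : Set N} {A : Set M} (hF : IsClosed F)
    (hA : IsOpen A) : IsOpen[whitneyC0Topology M N] {g : M → N | g ⁻¹' F ⊆ A} := by
  convert isOpen_whitneyC0_setOf_mapsTo hA.isClosed_compl hF.isOpen_compl using 3
  exact compl_subset_compl.symm

theorem continuous_whitneyC0_comp_homeomorph (φ : M ≃ₜ M) :
    Continuous[whitneyC0Topology M N, whitneyC0Topology M N] fun g : M → N => g ∘ φ := by
  refine continuous_generateFrom_iff.2 ?_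
  rintro _ ⟨U, hU, rfl⟩
  refine TopologicalSpace.isOpen_generateFrom_of_mem
    ⟨Prod.map φ.symm id ⁻¹' U, hU.preimage (φ.symm.continuous.prodMap continuous_id), ?_⟩
  ext g
  exact ⟨fun h x => by simpa using h (φ.symm x), fun h x => by simpa using h (φ x)⟩

theorem IsHomeomorphInvariant.whitneyC0_interior {S : Set (M → N)} (hS : IsHomeomorphInvariant S) :
    IsHomeomorphInvariant (@interior _ (whitneyC0Topology M N) S) := by
  let _ := whitneyC0Topology M N
  intro g hg φ
  have hgφ : g ∘ φ ∈ (· ∘ φ.symm) ⁻¹' interior S := by simpa [comp_assoc] using hg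
  refine interior_mono (fun h hh => ?_)
    (preimage_interior_subset_interior_preimage (continuous_whitneyC0_comp_homeomorph _) hgφ)
  simpa [comp_assoc] using hS _ hh φ

theorem IsHomeomorphInvariant.exists_open_separation {S O₁ O₂ : Set (M → N)}
    (hS : IsHomeomorphInvariant S) (hO₁ : IsOpen[whitneyC0Topology M N] O₁)
    (hO₂ : IsOpen[whitneyC0Topology M N] O₂) (hO₁S : O₁ ⊆ Sᶜ) (hO₂S : O₂ ⊆ S) {i j : M → N}
    (hi : i ∈ O₁) (hj : j ∈ O₂) :
    ∃ V W : Set (M → N),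
      IsOpen[whitneyC0Topology M N] V ∧ IsOpen[whitneyC0Topology M N] W ∧
      IsHomeomorphInvariant V ∧ IsHomeomorphInvariant W ∧ i ∈ V ∧ j ∈ W ∧ V ∩ W = ∅ := by
  let _ := whitneyC0Topology M N
  refine ⟨interior Sᶜ, interior S, isOpen_interior, isOpen_interior, hS.compl.whitneyC0_interior,
    hS.whitneyC0_interior, interior_maximal hO₁S hO₁ hi, interior_maximal hO₂S hO₂ hj, ?_⟩
  exact eq_empty_of_forall_notMem fun g hg => interior_subset hg.1 (interior_subset hg.2)

end WhitneyC0

section Separation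

variable {X Y : Type*} [TopologicalSpace X]

theorem IsClosedMap.exists_isOpen_preimage_closure_subset [TopologicalSpace Y] [RegularSpace Y]
    {f : X → Y} (hf : IsClosedMap f) {A : Set X} (hA : IsOpen A) {y : Y} (hy : f ⁻¹' {y} ⊆ A) :
    ∃ V, IsOpen V ∧ y ∈ V ∧ f ⁻¹' closure V ⊆ A := by
  have hyA : (f '' Aᶜ)ᶜ ∈ 𝓝ˢ {y} := by
    rw [nhdsSet_singleton]
    refine (hf _ hA.isClosed_compl).isOpen_compl.mem_nhds ?_
    rintro ⟨x, hx, rfl⟩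
    exact hx (hy rfl)
  obtain ⟨V, hV, hyV, hVA⟩ := isCompact_singleton.exists_isOpen_closure_subset hyA
  refine ⟨V, hV, singleton_subset_iff.1 hyV, fun x hx => ?_⟩
  by_contra hxA
  exact hVA hx ⟨x, hxA, rfl⟩

theorem exists_isOpen_isPreconnected_closure_subset [RegularSpace X] [LocallyConnectedSpace X]
    {x : X} {s : Set X} (hs : s ∈ 𝓝 x) :
    ∃ C, IsOpen C ∧ IsPreconnected C ∧ x ∈ C ∧ closure C ⊆ s := by
  obtain ⟨t, ht, htc, hts⟩ := exists_mem_nhds_isClosed_subset hs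
  obtain ⟨C, ⟨hC, hxC, hCc⟩, hCt⟩ := (LocallyConnectedSpace.open_connected_basis x).mem_iff.1 ht
  exact ⟨C, hC, hCc.isPreconnected, hxC, (closure_minimal hCt htc).trans hts⟩

theorem IsPreconnected.subset_of_subset_biUnion {ι : Type*} {s : Set X} (hs : IsPreconnected s)
    {F : Set ι} {U : ι → Set X} (hU : ∀ i ∈ F, IsOpen (U i)) (hdisj : F.PairwiseDisjoint U)
    (hsU : s ⊆ ⋃ i ∈ F, U i) {i : ι} (hi : i ∈ F) (hsi : (s ∩ U i).Nonempty) : s ⊆ U i := by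
  refine hs.subset_left_of_subset_union (v := ⋃ j ∈ F \ {i}, U j) (hU i hi)
    (isOpen_biUnion fun j hj => hU j hj.1)
    (disjoint_iUnion₂_right.2 fun j hj => hdisj hi hj.1 (Ne.symm hj.2)) (fun x hx => ?_) hsi
  obtain ⟨j, hj, hxj⟩ := mem_iUnion₂.1 (hsU hx)
  by_cases hji : j = i
  · exact Or.inl (hji ▸ hxj)
  · exact Or.inr (mem_iUnion₂.2 ⟨j, ⟨hj, hji⟩, hxj⟩)

/-- Maps `g` such that `ι`-many distinct components of `g ⁻¹' B` meet `g ⁻¹' B'`: a lower bound on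
the number of sheets of `g` over `B'` that is invariant under reparametrisation. -/
def distinctComponentsSet (ι : Type*) (B B' : Set Y) : Set (X → Y) :=
  {g | ∃ x : ι → X, (∀ k, g (x k) ∈ B') ∧
    Pairwise fun k l => x l ∉ connectedComponentIn (g ⁻¹' B) (x k)}

theorem isHomeomorphInvariant_distinctComponentsSet (ι : Type*) (B B' : Set Y) :
    IsHomeomorphInvariant (distinctComponentsSet (X := X) ι B B') := by
  rintro g ⟨x, hxB', hx⟩ φ
  refine ⟨fun k => φ.symm (x k), fun k => by simpa using hxB' k, fun k l hkl hmem => hx hkl ?_⟩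
  have hk : φ.symm (x k) ∈ (g ∘ φ) ⁻¹' B := connectedComponentIn_nonempty_iff.1 ⟨_, hmem⟩
  have := φ.continuous.continuousOn.image_connectedComponentIn_subset hk (mem_image_of_mem φ hmem)
  simpa [preimage_comp, φ.image_preimage] using this

theorem notMem_distinctComponentsSet_of_card_lt {ι κ : Type*} [Finite κ] {B B' : Set Y}
    {g : X → Y} {C : κ → Set X} (hC : ∀ p, IsPreconnected (C p)) (hCB : ∀ p, MapsTo g (C p) B)
    (hB' : g ⁻¹' B' ⊆ ⋃ p, C p) (hcard : Nat.card κ < Nat.card ι) :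
    g ∉ distinctComponentsSet ι B B' := by
  rintro ⟨x, hxB', hx⟩
  choose p hp using fun k => mem_iUnion.1 (hB' (hxB' k))
  obtain ⟨k, l, hpkl, hkl⟩ := not_injective_iff.1 fun hinj =>
    (Nat.card_le_card_of_injective p hinj).not_gt hcard
  exact hx hkl ((hC (p k)).subset_connectedComponentIn (hp k) (hCB (p k)) (hpkl ▸ hp l))

theorem mem_distinctComponentsSet_of_pairwiseDisjoint {B B' : Set Y} {g : X → Y} {F : Set X}
    {U : X → Set X} (hU : ∀ q, q ∈ U q ∧ IsOpen (U q)) (hdisj : F.PairwiseDisjoint U)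
    (hgF : MapsTo g F B') (hgB : g ⁻¹' B ⊆ ⋃ q ∈ F, U q) : g ∈ distinctComponentsSet F B B' := by
  refine ⟨Subtype.val, fun k => hgF k.2, fun k l hkl hmem => ?_⟩
  have hsub : connectedComponentIn (g ⁻¹' B) k ⊆ U k :=
    isPreconnected_connectedComponentIn.subset_of_subset_biUnion (fun q _ => (hU q).2) hdisj
      ((connectedComponentIn_subset _ _).trans hgB) k.2
      ⟨k, mem_connectedComponentIn (connectedComponentIn_nonempty_iff.1 ⟨l, hmem⟩), (hU k).1⟩
  exact (hdisj k.2 l.2 (Subtype.coe_injective.ne hkl)).ne_of_mem (hsub hmem) (hU l).1 rfl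

theorem exists_open_separation_of_card_lt [T2Space X] [RegularSpace X] [LocallyConnectedSpace X]
    [TopologicalSpace Y] [RegularSpace Y]
    {i j : X → Y} (hi : Continuous i) (hic : IsClosedMap i) (hjc : IsClosedMap j) {y : Y}
    (hFi : (i ⁻¹' {y}).Finite) (hFj : (j ⁻¹' {y}).Finite)
    (hlt : Nat.card (i ⁻¹' {y}) < Nat.card (j ⁻¹' {y})) :
    ∃ V W : Set (X → Y),
      IsOpen[whitneyC0Topology X Y] V ∧ IsOpen[whitneyC0Topology X Y] W ∧
      IsHomeomorphInvariant V ∧ IsHomeomorphInvariant W ∧ i ∈ V ∧ j ∈ W ∧ V ∩ W = ∅ := by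
  obtain ⟨U, hU, hdisj⟩ := hFj.t2_separation
  have hUo : IsOpen (⋃ q ∈ j ⁻¹' {y}, U q) := isOpen_biUnion fun q _ => (hU q).2
  obtain ⟨B, hB, hyB, hjB⟩ :=
    hjc.exists_isOpen_preimage_closure_subset hUo fun q hq => mem_iUnion₂.2 ⟨q, hq, (hU q).1⟩
  have hiB (p : i ⁻¹' {y}) : i ⁻¹' B ∈ 𝓝 (p : X) :=
    (hB.preimage hi).mem_nhds (by rw [mem_preimage, show i p = y from p.2]; exact hyB)
  choose C hCo hCc hpC hCB using fun p => exists_isOpen_isPreconnected_closure_subset (hiB p)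
  have := hFi.to_subtype
  obtain ⟨B', hB', hyB', hiB'⟩ := hic.exists_isOpen_preimage_closure_subset (isOpen_iUnion hCo)
    fun p hp => mem_iUnion.2 ⟨⟨p, hp⟩, hpC _⟩
  let _ := whitneyC0Topology X Y
  refine (isHomeomorphInvariant_distinctComponentsSet (j ⁻¹' {y}) B B').exists_open_separation
    ((isOpen_whitneyC0_setOf_mapsTo (isClosed_iUnion_of_finite fun p => isClosed_closure) hB).inter
      (isOpen_whitneyC0_setOf_preimage_subset isClosed_closure (isOpen_iUnion hCo)))
    ((isOpen_whitneyC0_setOf_mapsTo hFj.isClosed hB').inter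
      (isOpen_whitneyC0_setOf_preimage_subset isClosed_closure hUo))
    ?_ ?_ ⟨mapsTo_iUnion.2 hCB, hiB'⟩ ⟨fun q hq => (show j q = y from hq) ▸ hyB', hjB⟩
  · rintro g ⟨hgC, hgB'⟩
    refine notMem_distinctComponentsSet_of_card_lt hCc (fun p => ?_)
      ((preimage_mono subset_closure).trans hgB') hlt
    exact hgC.mono_left (subset_closure.trans (subset_iUnion (fun p => closure (C p)) p))
  · rintro g ⟨hgF, hgB⟩
    exact mem_distinctComponentsSet_of_pairwiseDisjoint hU hdisj hgF
      ((preimage_mono subset_closure).trans hgB)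

theorem exists_open_separation_of_card_ne [T2Space X] [RegularSpace X] [LocallyConnectedSpace X]
    [TopologicalSpace Y] [RegularSpace Y]
    {i j : X → Y} (hi : Continuous i) (hj : Continuous j) (hic : IsClosedMap i)
    (hjc : IsClosedMap j) {y : Y} (hFi : (i ⁻¹' {y}).Finite) (hFj : (j ⁻¹' {y}).Finite)
    (hne : Nat.card (i ⁻¹' {y}) ≠ Nat.card (j ⁻¹' {y})) :
    ∃ V W : Set (X → Y),
      IsOpen[whitneyC0Topology X Y] V ∧ IsOpen[whitneyC0Topology X Y] W ∧
      IsHomeomorphInvariant V ∧ IsHomeomorphInvariant W ∧ i ∈ V ∧ j ∈ W ∧ V ∩ W = ∅ := by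
  rcases hne.lt_or_gt with hlt | hlt
  · exact exists_open_separation_of_card_lt hi hic hjc hFi hFj hlt
  · obtain ⟨V, W, hV, hW, hVinv, hWinv, hjV, hiW, hVW⟩ :=
      exists_open_separation_of_card_lt hj hjc hic hFj hFi hlt
    exact ⟨W, V, hW, hV, hWinv, hVinv, hiW, hjV, by rw [inter_comm, hVW]⟩

end Separation

theorem stmt_8_general
    {E : Type*} [NormedAddCommGroup E] [NormedSpace ℝ E] [FiniteDimensional ℝ E]
    {H : Type*} [TopologicalSpace H] {I : ModelWithCorners ℝ E H}
    {M : Type*} [TopologicalSpace M] [ChartedSpace H M]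
    [T2Space M] [I.Boundaryless]
    {E' : Type*} [NormedAddCommGroup E'] [NormedSpace ℝ E'] [FiniteDimensional ℝ E']
    {H' : Type*} [TopologicalSpace H'] {J : ModelWithCorners ℝ E' H'}
    {N : Type*} [TopologicalSpace N] [ChartedSpace H' N]
    [T2Space N]
    (i₁ i₂ : M → N)
    (h₁ : ContMDiff I J (⊤ : ℕ∞) i₁) (h₁imm : ∀ x : M, Function.Injective (mfderiv I J i₁ x))
    (h₁prop : ∀ K : Set N, IsCompact K → IsCompact (i₁ ⁻¹' K))
    (h₂ : ContMDiff I J (⊤ : ℕ∞) i₂) (h₂imm : ∀ x : M, Function.Injective (mfderiv I J i₂ x))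
    (h₂prop : ∀ K : Set N, IsCompact K → IsCompact (i₂ ⁻¹' K))
    (hδ : ∃ y ∈ Set.range i₁, Nat.card (i₁ ⁻¹' {y}) ≠ Nat.card (i₂ ⁻¹' {y})) :
    ∃ V W : Set (M → N),
      IsOpen[whitneyC0Topology M N] V ∧ IsOpen[whitneyC0Topology M N] W ∧
      (∀ j ∈ V, ∀ f : M ≃ₘ⟮I, I⟯ M, (j ∘ f) ∈ V) ∧
      (∀ j ∈ W, ∀ f : M ≃ₘ⟮I, I⟯ M, (j ∘ f) ∈ W) ∧
      i₁ ∈ V ∧ i₂ ∈ W ∧ V ∩ W = ∅ := by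
  have := I.locallyCompactSpace
  have := ChartedSpace.locallyCompactSpace H M
  have := J.locallyCompactSpace
  have := ChartedSpace.locallyCompactSpace H' N
  have : LocallyConnectedSpace H := I.toHomeomorph.locallyConnectedSpace
  have := ChartedSpace.locallyConnectedSpace H M
  have hclosed {i : M → N} (hi : ContMDiff I J (⊤ : ℕ∞) i)
      (hprop : ∀ K : Set N, IsCompact K → IsCompact (i ⁻¹' K)) : IsClosedMap i :=
    (isProperMap_iff_isCompact_preimage.2 ⟨hi.continuous, fun K hK => hprop K hK⟩).isClosedMap
  have hfinite {i : M → N} (hi : ContMDiff I J (⊤ : ℕ∞) i)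
      (himm : ∀ x, Injective (mfderiv I J i x))
      (hprop : ∀ K : Set N, IsCompact K → IsCompact (i ⁻¹' K)) (y : N) : (i ⁻¹' {y}).Finite :=
    (hprop _ isCompact_singleton).finite_of_injOn_nhds fun x =>
      exists_mem_nhds_injOn_of_injective_mfderiv (hi x) (by simp) (himm x)
  obtain ⟨y, -, hne⟩ := hδ
  obtain ⟨V, W, hV, hW, hVinv, hWinv, hiV, hjW, hVW⟩ :=
    exists_open_separation_of_card_ne h₁.continuous h₂.continuous (hclosed h₁ h₁prop)
      (hclosed h₂ h₂prop) (hfinite h₁ h₁imm h₁prop y) (hfinite h₂ h₂imm h₂prop y) hne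
  exact ⟨V, W, hV, hW, fun j hj f => hVinv j hj f.toHomeomorph,
    fun j hj f => hWinv j hj f.toHomeomorph, hiV, hjW, hVW⟩

/-- Two proper immersions with the same image but different counting functions
`δ₁ ≠ δ₂` have distinct `Diff(M)`-orbits, which can be separated by disjoint saturated
Whitney $C^0$-open neighbourhoods in the space of proper immersions. -/
theorem stmt_8
    {E : Type*} [NormedAddCommGroup E] [NormedSpace ℝ E] [FiniteDimensional ℝ E]
    {H : Type*} [TopologicalSpace H] {I : ModelWithCorners ℝ E H}
    {M : Type*} [TopologicalSpace M] [ChartedSpace H M] [IsManifold I (⊤ : ℕ∞) M]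
    [T2Space M] [SecondCountableTopology M] [ConnectedSpace M] [I.Boundaryless]
    {E' : Type*} [NormedAddCommGroup E'] [NormedSpace ℝ E'] [FiniteDimensional ℝ E']
    {H' : Type*} [TopologicalSpace H'] {J : ModelWithCorners ℝ E' H'}
    {N : Type*} [TopologicalSpace N] [ChartedSpace H' N] [IsManifold J (⊤ : ℕ∞) N]
    [T2Space N] [SecondCountableTopology N] [ConnectedSpace N] [J.Boundaryless]
    (hdim : Module.finrank ℝ E ≤ Module.finrank ℝ E')
    (i₁ i₂ : M → N)
    (h₁ : ContMDiff I J (⊤ : ℕ∞) i₁) (h₁imm : ∀ x : M, Function.Injective (mfderiv I J i₁ x))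
    (h₁prop : ∀ K : Set N, IsCompact K → IsCompact (i₁ ⁻¹' K))
    (h₂ : ContMDiff I J (⊤ : ℕ∞) i₂) (h₂imm : ∀ x : M, Function.Injective (mfderiv I J i₂ x))
    (h₂prop : ∀ K : Set N, IsCompact K → IsCompact (i₂ ⁻¹' K))
    (him : Set.range i₁ = Set.range i₂)
    (hδ : ∃ y ∈ Set.range i₁, Nat.card (i₁ ⁻¹' {y}) ≠ Nat.card (i₂ ⁻¹' {y})) :
    ∃ V W : Set (M → N),
      IsOpen[whitneyC0Topology M N] V ∧ IsOpen[whitneyC0Topology M N] W ∧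
      (∀ j ∈ V, ∀ f : M ≃ₘ⟮I, I⟯ M, (j ∘ f) ∈ V) ∧
      (∀ j ∈ W, ∀ f : M ≃ₘ⟮I, I⟯ M, (j ∘ f) ∈ W) ∧
      i₁ ∈ V ∧ i₂ ∈ W ∧ V ∩ W = ∅ :=
  stmt_8_general i₁ i₂ h₁ h₁imm h₁prop h₂ h₂imm h₂prop hδ
end

section
/- Let $i : M \to N$ be an immersion of connected second countable smooth manifolds. Then the isotropy group $\mathrm{Diff}_i(M)$ is countable, and if $M$ is compact it is finite. -/
open Function Set Filter
open scoped Manifold Topology ContDiff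

/-! An immersion is locally injective: composing its chart expression with a continuous left
inverse of the derivative gives a map with identity derivative, to which the inverse function
theorem applies. So an element of `Diff_i(M)` is a lift of `i` through the separated, locally
injective map `i`; on the connected manifold `M` such a lift is determined
by its value at one point `x₀`. This embeds `Diff_i(M)` into the fibre `i⁻¹(i x₀)`, which is
discrete, hence countable when `M` is second countable and finite when `M` is compact. -/

theorem HasStrictFDerivAt.exists_mem_nhds_injOn_s14 {𝕜 E F : Type*} [NontriviallyNormedField 𝕜]
    [NormedAddCommGroup E] [NormedSpace 𝕜 E] [CompleteSpace E]
    [NormedAddCommGroup F] [NormedSpace 𝕜 F]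
    {g : E → F} {A : E →L[𝕜] F} {x : E} (hg : HasStrictFDerivAt g A x) (hA : A.HasLeftInverse) :
    ∃ U ∈ 𝓝 x, InjOn g U := by
  obtain ⟨B, hB⟩ := hA
  have hBA : B.comp A = (ContinuousLinearEquiv.refl 𝕜 E : E →L[𝕜] E) :=
    ContinuousLinearMap.ext hB
  have hBg : HasStrictFDerivAt (B ∘ g) (ContinuousLinearEquiv.refl 𝕜 E : E →L[𝕜] E) x :=
    hBA ▸ B.hasStrictFDerivAt.comp x hg
  obtain ⟨U, hU, hinv⟩ := eventually_iff_exists_mem.mp hBg.eventually_left_inverse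
  exact ⟨U, hU, (show LeftInvOn _ _ U from hinv).injOn.of_comp⟩

section Manifold

variable {𝕜 : Type*} [RCLike 𝕜]
  {E : Type*} [NormedAddCommGroup E] [NormedSpace 𝕜 E] [CompleteSpace E]
  {H : Type*} [TopologicalSpace H] {I : ModelWithCorners 𝕜 E H} [I.Boundaryless]
  {M : Type*} [TopologicalSpace M] [ChartedSpace H M]
  {E' : Type*} [NormedAddCommGroup E'] [NormedSpace 𝕜 E'] [FiniteDimensional 𝕜 E']
  {H' : Type*} [TopologicalSpace H'] {J : ModelWithCorners 𝕜 E' H'}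
  {N : Type*} [TopologicalSpace N] [ChartedSpace H' N]
  {n : ℕ∞ω} {f : M → N}

theorem ContMDiffAt.exists_mem_nhds_injOn_of_injective_mfderiv {x : M}
    (hf : ContMDiffAt I J n f x) (hn : n ≠ 0) (hinj : Injective (mfderiv I J f x)) :
    ∃ U ∈ 𝓝 x, InjOn f U := by
  have hg : ContDiffAt 𝕜 n (writtenInExtChartAt I J x f) (extChartAt I x x) := by
    rw [← contDiffWithinAt_univ, ← I.range_eq_univ]
    exact (contMDiffAt_iff.mp hf).2
  have hderiv : mfderiv I J f x = fderiv 𝕜 (writtenInExtChartAt I J x f) (extChartAt I x x) := by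
    rw [(hf.mdifferentiableAt hn).mfderiv, I.range_eq_univ, fderivWithin_univ]
  obtain ⟨W, hW, hinjW⟩ := (hg.hasStrictFDerivAt hn).exists_mem_nhds_injOn_s14
    (.of_injective_of_finiteDimensional (hderiv ▸ hinj))
  refine ⟨(extChartAt I x).source ∩ extChartAt I x ⁻¹' W,
    inter_mem (extChartAt_source_mem_nhds x) ((continuousAt_extChartAt x).preimage_mem_nhds hW), ?_⟩
  rintro x₁ ⟨hx₁, hW₁⟩ x₂ ⟨hx₂, hW₂⟩ he
  refine (extChartAt I x).injOn hx₁ hx₂ (hinjW hW₁ hW₂ ?_)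
  simp only [writtenInExtChartAt, comp_apply, (extChartAt I x).left_inv hx₁,
    (extChartAt I x).left_inv hx₂, he]

theorem ContMDiff.isLocallyInjective_of_injective_mfderiv
    (hf : ContMDiff I J n f) (hn : n ≠ 0) (hinj : ∀ x, Injective (mfderiv I J f x)) :
    IsLocallyInjective f :=
  isLocallyInjective_iff_nhds.mpr fun x ↦
    (hf x).exists_mem_nhds_injOn_of_injective_mfderiv hn (hinj x)

end Manifold

section Lifts

variable {X Y ι : Type*} [TopologicalSpace X] {f : X → Y}

theorem IsLocallyInjective.discreteTopology_preimage_singleton (hf : IsLocallyInjective f)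
    (y : Y) : DiscreteTopology (f ⁻¹' {y}) := by
  rw [discreteTopology_iff_locallyInjective y]
  convert hf.comp_right continuous_subtype_val Subtype.val_injective using 1
  exact funext fun x ↦ x.2.symm

variable {φ : ι → X → X} (hφ : Injective φ) (hcont : ∀ a, Continuous (φ a))
  (hcomp : ∀ a, f ∘ φ a = f)
include hφ hcont hcomp

theorem IsSeparatedMap.injective_eval_of_comp_eq [PreconnectedSpace X]
    (sep : IsSeparatedMap f) (hf : IsLocallyInjective f) (x₀ : X) :
    Injective fun a ↦ (⟨φ a x₀, congrFun (hcomp a) x₀⟩ : f ⁻¹' {f x₀}) := by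
  intro a b hab
  refine hφ (sep.eq_of_comp_eq hf (hcont a) (hcont b) ?_ x₀ (congrArg Subtype.val hab))
  rw [hcomp, hcomp]

theorem IsSeparatedMap.countable_of_comp_eq [ConnectedSpace X] [SecondCountableTopology X]
    (sep : IsSeparatedMap f) (hf : IsLocallyInjective f) : Countable ι := by
  obtain ⟨x₀⟩ : Nonempty X := inferInstance
  have := hf.discreteTopology_preimage_singleton (f x₀)
  have : Countable (f ⁻¹' {f x₀}) := TopologicalSpace.separableSpace_iff_countable.mp inferInstance
  exact (sep.injective_eval_of_comp_eq hφ hcont hcomp hf x₀).countable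

theorem IsSeparatedMap.finite_of_comp_eq [TopologicalSpace Y] [T1Space Y] [ConnectedSpace X]
    [CompactSpace X] (sep : IsSeparatedMap f) (hf : IsLocallyInjective f) (hfc : Continuous f) :
    Finite ι := by
  obtain ⟨x₀⟩ : Nonempty X := inferInstance
  have := hf.discreteTopology_preimage_singleton (f x₀)
  have : CompactSpace (f ⁻¹' {f x₀}) :=
    isCompact_iff_compactSpace.mp ((isClosed_singleton.preimage hfc).isCompact)
  have : Finite (f ⁻¹' {f x₀}) := finite_of_compact_of_discrete
  exact .of_injective _ (sep.injective_eval_of_comp_eq hφ hcont hcomp hf x₀)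

end Lifts

theorem stmt_14_general
    {E : Type*} [NormedAddCommGroup E] [NormedSpace ℝ E] [FiniteDimensional ℝ E]
    {H : Type*} [TopologicalSpace H] {I : ModelWithCorners ℝ E H}
    {M : Type*} [TopologicalSpace M] [ChartedSpace H M]
    [T2Space M] [SecondCountableTopology M] [ConnectedSpace M] [I.Boundaryless]
    {E' : Type*} [NormedAddCommGroup E'] [NormedSpace ℝ E'] [FiniteDimensional ℝ E']
    {H' : Type*} [TopologicalSpace H'] {J : ModelWithCorners ℝ E' H'}
    {N : Type*} [TopologicalSpace N] [ChartedSpace H' N]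
    [T2Space N]
    (i : M → N) (hi : ContMDiff I J (⊤ : ℕ∞) i)
    (himm : ∀ x : M, Function.Injective (mfderiv I J i x)) :
    Countable {f : M ≃ₘ⟮I, I⟯ M // ∀ x, i (f x) = i x} ∧
      (CompactSpace M → Finite {f : M ≃ₘ⟮I, I⟯ M // ∀ x, i (f x) = i x}) := by
  have hloc : IsLocallyInjective i :=
    hi.isLocallyInjective_of_injective_mfderiv (by simp) himm
  have sep : IsSeparatedMap i := T2Space.isSeparatedMap i
  have hφ : Injective fun f : {f : M ≃ₘ⟮I, I⟯ M // ∀ x, i (f x) = i x} ↦ ⇑f.1 :=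
    DFunLike.coe_injective.comp Subtype.val_injective
  have hcont (f : {f : M ≃ₘ⟮I, I⟯ M // ∀ x, i (f x) = i x}) : Continuous f.1 := f.1.continuous
  have hcomp (f : {f : M ≃ₘ⟮I, I⟯ M // ∀ x, i (f x) = i x}) : i ∘ f.1 = i := funext f.2
  exact ⟨sep.countable_of_comp_eq hφ hcont hcomp hloc,
    fun _ ↦ sep.finite_of_comp_eq hφ hcont hcomp hloc hi.continuous⟩

/-- The isotropy group `Diff_i(M)` of an immersion of connected second
countable manifolds is countable, and finite when `M` is compact. -/
theorem stmt_14
    {E : Type*} [NormedAddCommGroup E] [NormedSpace ℝ E] [FiniteDimensional ℝ E]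
    {H : Type*} [TopologicalSpace H] {I : ModelWithCorners ℝ E H}
    {M : Type*} [TopologicalSpace M] [ChartedSpace H M] [IsManifold I (⊤ : ℕ∞) M]
    [T2Space M] [SecondCountableTopology M] [ConnectedSpace M] [I.Boundaryless]
    {E' : Type*} [NormedAddCommGroup E'] [NormedSpace ℝ E'] [FiniteDimensional ℝ E']
    {H' : Type*} [TopologicalSpace H'] {J : ModelWithCorners ℝ E' H'}
    {N : Type*} [TopologicalSpace N] [ChartedSpace H' N] [IsManifold J (⊤ : ℕ∞) N]
    [T2Space N] [SecondCountableTopology N] [ConnectedSpace N] [J.Boundaryless]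
    (hdim : Module.finrank ℝ E ≤ Module.finrank ℝ E')
    (i : M → N) (hi : ContMDiff I J (⊤ : ℕ∞) i)
    (himm : ∀ x : M, Function.Injective (mfderiv I J i x)) :
    Countable {f : M ≃ₘ⟮I, I⟯ M // ∀ x, i (f x) = i x} ∧
      (CompactSpace M → Finite {f : M ≃ₘ⟮I, I⟯ M // ∀ x, i (f x) = i x}) :=
  stmt_14_general i hi himm
end
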